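/- Let N ≥ 1 be an integer, n > max(N−2, 0) a real number, R > 0, K ≥ 0, γ > 1, M > 0, T > 0. Suppose ρ, V : [0,T] × [0,∞) → ℝ are C¹ functions such that: (i) ρ(t,r) ≥ 0 for all t, r; (ii) ρ(t,r) = 0 and V(t,r) = 0 whenever r ≥ R; (iii) for every t ∈ [0,T], α(N)·∫₀^R ρ(t,s) s^{N−1} ds = M; (iv) for each t the map r ↦ ρ(t,r)^{γ−1} is differentiable on (0,R), and for all t ∈ [0,T] and 0 < r < R: ∂ₜV(t,r) + V(t,r)·∂ᵣV(t,r) + (Kγ/(γ−1))·∂ᵣ(ρ(t,r)^{γ−1}) = −α(N)·r^{1−N}·∫₀^r ρ(t,s) s^{N−1} ds. Define H(t) := ∫₀^R r^n V(t,r) dr. Then H is differentiable on [0,T] and satisfies the Riccati differential inequality H′(t) ≥ n(n+1)·H(t)²/(2R^{n+2}) − R^{n−N+2}·M/(n−N+2) for all t ∈ [0,T]. -/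

import Mathlib

/-!
Differentiating under the integral sign and substituting the momentum equation splits `H'` into a
convective, a pressure and a gravity term. Integrating by parts against `rⁿ` (the boundary terms
vanish because `V` and `ρ` vanish at `R` and `0ⁿ = 0`) turns the convective term into
`(n/2) ∫ r^(n-1) V²` and shows that the pressure term has the right sign. The enclosed mass never
exceeds `M / α(N)`, which bounds the gravity term by `R^(n-N+2) M / (n-N+2)`, and Cauchy–Schwarz
gives `(n+2) H² ≤ R^(n+2) ∫ r^(n-1) V²`.
-/

/-- The constant `α(N)`: `α(1) = 1`, `α(2) = 2π`, and
`α(N) = N(N−2)·π^{N/2}/Γ(N/2+1)` for `N ≥ 3`. -/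
noncomputable def alphaConst (N : ℕ) : ℝ :=
  if N = 1 then 1
  else if N = 2 then 2 * Real.pi
  else (N : ℝ) * ((N : ℝ) - 2) * Real.pi ^ ((N : ℝ) / 2) / Real.Gamma ((N : ℝ) / 2 + 1)

open Set MeasureTheory intervalIntegral Function Filter Real Topology

theorem alphaConst_nonneg (N : ℕ) : 0 ≤ alphaConst N := by
  unfold alphaConst
  split_ifs with h1 h2
  · norm_num
  · positivity
  · have hN : 0 ≤ (N : ℝ) * ((N : ℝ) - 2) := by
      rcases Nat.lt_or_ge N 3 with h | h
      · interval_cases N <;> simp_all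
      · have : (3 : ℝ) ≤ N := by exact_mod_cast h
        nlinarith
    exact div_nonneg (mul_nonneg hN (by positivity)) (Gamma_pos_of_pos (by positivity)).le

theorem continuousOn_parametric_intervalIntegral {X : Type*} [TopologicalSpace X]
    [FirstCountableTopology X] {s : Set X} {f : X → ℝ → ℝ} {a b : ℝ} (hs : IsCompact s)
    (hf : ContinuousOn (uncurry f) (s ×ˢ uIcc a b)) :
    ContinuousOn (fun x => ∫ r in a..b, f x r) s := by
  obtain ⟨C, hC⟩ := (hs.prod isCompact_uIcc).exists_bound_of_continuousOn hf
  intro x hx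
  refine continuousWithinAt_of_dominated_interval (bound := fun _ => C) ?_ ?_
    intervalIntegrable_const ?_
  · filter_upwards [self_mem_nhdsWithin] with y hy
    exact ((hf.uncurry_left y hy).mono uIoc_subset_uIcc).aestronglyMeasurable measurableSet_uIoc
  · filter_upwards [self_mem_nhdsWithin] with y hy
    exact ae_of_all _ fun r hr => hC (y, r) ⟨hy, uIoc_subset_uIcc hr⟩
  · exact ae_of_all _ fun r hr => hf.uncurry_right r (uIoc_subset_uIcc hr) x hx

theorem hasDerivWithinAt_Icc_of_hasDerivAt_Ioo {F G : ℝ → ℝ} {a b t : ℝ}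
    (hF : ContinuousOn F (Icc a b)) (hG : ContinuousOn G (Icc a b))
    (hderiv : ∀ x ∈ Ioo a b, HasDerivAt F (G x) x) (ht : t ∈ Icc a b) :
    HasDerivWithinAt F (G t) (Icc a b) t := by
  have hint : ∀ x ∈ Icc a b, IntervalIntegrable G volume a x := fun x hx =>
    (hG.mono (Icc_subset_Icc_right hx.2)).intervalIntegrable_of_Icc hx.1
  have hFTC : ∀ x ∈ Icc a b, F x = F a + ∫ y in a..x, G y := fun x hx => by
    rw [integral_eq_sub_of_hasDerivAt_of_le hx.1 (hF.mono (Icc_subset_Icc_right hx.2))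
      (fun y hy => hderiv y ⟨hy.1, hy.2.trans_le hx.2⟩) (hint x hx)]
    ring
  have : Fact (t ∈ Icc a b) := ⟨ht⟩
  have hprim : HasDerivWithinAt (fun u => ∫ y in a..u, G y) (G t) (Icc a b) t :=
    integral_hasDerivWithinAt_right (hint t ht)
      (hG.stronglyMeasurableAtFilter_nhdsWithin measurableSet_Icc t) (hG t ht)
  exact (hprim.const_add (F a)).congr hFTC (hFTC t ht)

theorem hasDerivWithinAt_parametric_intervalIntegral {f f' : ℝ → ℝ → ℝ} {t₀ t₁ a b t : ℝ}
    (hf : ContinuousOn (uncurry f) (Icc t₀ t₁ ×ˢ uIcc a b))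
    (hf' : ContinuousOn (uncurry f') (Icc t₀ t₁ ×ˢ uIcc a b))
    (hderiv : ∀ τ ∈ Ioo t₀ t₁, ∀ r ∈ uIcc a b, HasDerivAt (fun σ => f σ r) (f' τ r) τ)
    (ht : t ∈ Icc t₀ t₁) :
    HasDerivWithinAt (fun τ => ∫ r in a..b, f τ r) (∫ r in a..b, f' t r) (Icc t₀ t₁) t := by
  obtain ⟨C, hC⟩ := (isCompact_Icc.prod isCompact_uIcc).exists_bound_of_continuousOn hf'
  have hmeas : ∀ {g : ℝ → ℝ → ℝ}, ContinuousOn (uncurry g) (Icc t₀ t₁ ×ˢ uIcc a b) →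
      ∀ τ ∈ Icc t₀ t₁, AEStronglyMeasurable (g τ) (volume.restrict (uIoc a b)) := fun hg τ hτ =>
    ((hg.uncurry_left τ hτ).mono uIoc_subset_uIcc).aestronglyMeasurable measurableSet_uIoc
  refine hasDerivWithinAt_Icc_of_hasDerivAt_Ioo
    (continuousOn_parametric_intervalIntegral isCompact_Icc hf)
    (continuousOn_parametric_intervalIntegral isCompact_Icc hf') (fun τ hτ => ?_) ht
  exact (hasDerivAt_integral_of_dominated_loc_of_deriv_le (bound := fun _ => C)
    (isOpen_Ioo.mem_nhds hτ)
    (eventually_of_mem (isOpen_Ioo.mem_nhds hτ) fun σ hσ => hmeas hf σ (Ioo_subset_Icc_self hσ))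
    ((hf.uncurry_left τ (Ioo_subset_Icc_self hτ)).intervalIntegrable)
    (hmeas hf' τ (Ioo_subset_Icc_self hτ))
    (ae_of_all _ fun r hr σ hσ => hC (σ, r) ⟨Ioo_subset_Icc_self hσ, uIoc_subset_uIcc hr⟩)
    intervalIntegrable_const
    (ae_of_all _ fun r hr σ hσ => hderiv σ hσ r (uIoc_subset_uIcc hr))).2

theorem continuousOn_uncurry_rpow_mul {g : ℝ → ℝ → ℝ} {s : Set ℝ} {n R : ℝ} (hn : 0 ≤ n)
    (hR : 0 ≤ R) (hg : ContinuousOn (uncurry g) (s ×ˢ Ici 0)) :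
    ContinuousOn (uncurry fun t r => r ^ n * g t r) (s ×ˢ uIcc 0 R) :=
  ((continuous_rpow_const hn).comp continuous_snd).continuousOn.mul
    (hg.mono (prod_mono subset_rfl (uIcc_of_le hR ▸ Icc_subset_Ici_self)))

noncomputable def partialFst (f : ℝ → ℝ → ℝ) (s : Set (ℝ × ℝ)) (x y : ℝ) : ℝ :=
  fderivWithin ℝ (uncurry f) s (x, y) (1, 0)

noncomputable def partialSnd (f : ℝ → ℝ → ℝ) (s : Set (ℝ × ℝ)) (x y : ℝ) : ℝ :=
  fderivWithin ℝ (uncurry f) s (x, y) (0, 1)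

section PartialDerivatives

variable {f : ℝ → ℝ → ℝ}

theorem ContDiffOn.continuousOn_partialFst {s : Set (ℝ × ℝ)} (hf : ContDiffOn ℝ 1 (uncurry f) s)
    (hs : UniqueDiffOn ℝ s) : ContinuousOn (uncurry (partialFst f s)) s :=
  (hf.continuousOn_fderivWithin hs le_rfl).clm_apply continuousOn_const

theorem ContDiffOn.continuousOn_partialSnd {s : Set (ℝ × ℝ)} (hf : ContDiffOn ℝ 1 (uncurry f) s)
    (hs : UniqueDiffOn ℝ s) : ContinuousOn (uncurry (partialSnd f s)) s :=
  (hf.continuousOn_fderivWithin hs le_rfl).clm_apply continuousOn_const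

theorem DifferentiableOn.hasDerivAt_partialFst {s t : Set ℝ} {x y : ℝ}
    (hf : DifferentiableOn ℝ (uncurry f) (s ×ˢ t)) (hs : s ∈ 𝓝 x) (hy : y ∈ t) :
    HasDerivAt (fun τ => f τ y) (partialFst f (s ×ˢ t) x y) x := by
  have h := (hf (x, y) ⟨mem_of_mem_nhds hs, hy⟩).hasFDerivWithinAt.comp_hasDerivWithinAt x
    ((hasDerivAt_id x).prodMk (hasDerivAt_const x y)).hasDerivWithinAt fun _ hτ => mk_mem_prod hτ hy
  exact h.hasDerivAt hs

theorem DifferentiableOn.hasDerivAt_partialSnd {s t : Set ℝ} {x y : ℝ}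
    (hf : DifferentiableOn ℝ (uncurry f) (s ×ˢ t)) (hx : x ∈ s) (ht : t ∈ 𝓝 y) :
    HasDerivAt (fun r => f x r) (partialSnd f (s ×ˢ t) x y) y := by
  have h := (hf (x, y) ⟨hx, mem_of_mem_nhds ht⟩).hasFDerivWithinAt.comp_hasDerivWithinAt y
    ((hasDerivAt_const y x).prodMk (hasDerivAt_id y)).hasDerivWithinAt fun _ hr => mk_mem_prod hx hr
  exact h.hasDerivAt ht

end PartialDerivatives

theorem integral_rpow_mul_deriv {n R : ℝ} {f f' : ℝ → ℝ} (hn : 0 < n) (hR : 0 ≤ R)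
    (hf : ContinuousOn f (Icc 0 R)) (hderiv : ∀ r ∈ Ioo 0 R, HasDerivAt f (f' r) r)
    (hint : IntervalIntegrable (fun r => r ^ n * f' r) volume 0 R) :
    ∫ r in 0..R, r ^ n * f' r = R ^ n * f R - n * ∫ r in 0..R, r ^ (n - 1) * f r := by
  have hint' : IntervalIntegrable (fun r => r ^ (n - 1) * f r) volume 0 R :=
    (intervalIntegrable_rpow' (by linarith)).mul_continuousOn (by rwa [uIcc_of_le hR])
  have hFTC := integral_eq_sub_of_hasDerivAt_of_le hR
    ((continuous_rpow_const hn.le).continuousOn.mul hf)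
    (fun r hr => ((hasDerivAt_rpow_const (Or.inl hr.1.ne')).mul (hderiv r hr)).congr_deriv
      (by ring : _ = n * (r ^ (n - 1) * f r) + r ^ n * f' r))
    ((hint'.const_mul n).add hint)
  simp only [Pi.mul_apply] at hFTC
  rw [integral_add (hint'.const_mul n) hint, intervalIntegral.integral_const_mul,
    zero_rpow hn.ne', zero_mul, sub_zero] at hFTC
  linarith

theorem sq_integral_rpow_mul_le {n R : ℝ} {v : ℝ → ℝ} (hn : 0 < n) (hR : 0 < R)
    (hv : ContinuousOn v (Icc 0 R)) :
    (n + 2) * (∫ r in 0..R, r ^ n * v r) ^ 2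
      ≤ R ^ (n + 2) * ∫ r in 0..R, r ^ (n - 1) * v r ^ 2 := by
  set H := ∫ r in 0..R, r ^ n * v r
  set A := ∫ r in 0..R, r ^ (n - 1) * v r ^ 2
  have hRn : 0 < R ^ (n + 2) := rpow_pos_of_pos hR _
  set lam := (n + 2) * H / R ^ (n + 2)
  have hv' : ContinuousOn v (uIcc 0 R) := by rwa [uIcc_of_le hR.le]
  have hA : IntervalIntegrable (fun r => r ^ (n - 1) * v r ^ 2) volume 0 R :=
    (intervalIntegrable_rpow' (by linarith)).mul_continuousOn (hv'.pow 2)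
  have hH : IntervalIntegrable (fun r => r ^ n * v r) volume 0 R :=
    ((continuous_rpow_const hn.le).continuousOn.mul hv').intervalIntegrable
  have hexpand : EqOn (fun r => r ^ (n - 1) * (v r - lam * r) ^ 2)
      (fun r => r ^ (n - 1) * v r ^ 2 - 2 * lam * (r ^ n * v r) + lam ^ 2 * r ^ (n + 1))
      (uIcc 0 R) := fun r hr => by
    have hr0 : 0 ≤ r := by rw [uIcc_of_le hR.le] at hr; exact hr.1
    have e1 : r ^ n = r ^ (n - 1) * r := by
      rw [← rpow_add_one' hr0 (by linarith), sub_add_cancel]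
    have e2 : r ^ (n + 1) = r ^ (n - 1) * r ^ 2 := by
      rw [show n + 1 = n - 1 + 2 by ring, rpow_add' hr0 (by linarith), rpow_two]
    simp only [e1, e2]
    ring
  -- Cauchy–Schwarz: `0 ≤ ∫ r^(n-1) (v - λ r)²` at the minimising `λ`.
  have hnonneg : 0 ≤ ∫ r in 0..R, r ^ (n - 1) * (v r - lam * r) ^ 2 :=
    integral_nonneg hR.le fun r hr => mul_nonneg (rpow_nonneg hr.1 _) (sq_nonneg _)
  rw [integral_congr hexpand, integral_add (hA.sub (hH.const_mul _))
    ((intervalIntegrable_rpow' (by linarith)).const_mul _), integral_sub hA (hH.const_mul _),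
    intervalIntegral.integral_const_mul, intervalIntegral.integral_const_mul,
    integral_rpow (Or.inl (by linarith)),
    zero_rpow (by linarith), show n + 1 + 1 = n + 2 by ring] at hnonneg
  have hlam : lam * R ^ (n + 2) = (n + 2) * H := div_mul_cancel₀ _ hRn.ne'
  have hquad : lam ^ 2 * ((R ^ (n + 2) - 0) / (n + 2)) = lam * H := by
    field_simp
    linear_combination lam * hlam
  have hlamH : lam * H ≤ A := by
    change 0 ≤ A - 2 * lam * H + _ at hnonneg
    linarith
  calc (n + 2) * H ^ 2 = lam * H * R ^ (n + 2) := by linear_combination -H * hlam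
    _ ≤ A * R ^ (n + 2) := mul_le_mul_of_nonneg_right hlamH hRn.le
    _ = R ^ (n + 2) * A := mul_comm _ _

theorem integral_rpow_mul_le_of_le {s R M : ℝ} {g : ℝ → ℝ} (hs : -1 < s) (hR : 0 ≤ R)
    (hg : ContinuousOn g (Icc 0 R)) (hgM : ∀ r ∈ Icc 0 R, g r ≤ M) :
    ∫ r in 0..R, r ^ s * g r ≤ R ^ (s + 1) * M / (s + 1) := by
  have hint := intervalIntegrable_rpow' (a := 0) (b := R) hs
  calc ∫ r in 0..R, r ^ s * g r ≤ ∫ r in 0..R, r ^ s * M :=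
        integral_mono_on hR (hint.mul_continuousOn (by rwa [uIcc_of_le hR])) (hint.mul_const M)
          fun r hr => mul_le_mul_of_nonneg_left (hgM r hr) (rpow_nonneg hr.1 _)
    _ = R ^ (s + 1) * M / (s + 1) := by
        rw [intervalIntegral.integral_mul_const, integral_rpow (Or.inl hs),
          zero_rpow (by linarith)]
        ring

theorem integral_rpow_mul_mul_deriv_eq {n R : ℝ} {v v' : ℝ → ℝ} (hn : 0 < n) (hR : 0 ≤ R)
    (hv : ContinuousOn v (Icc 0 R)) (hv' : ContinuousOn v' (Icc 0 R))
    (hderiv : ∀ r ∈ Ioo 0 R, HasDerivAt v (v' r) r) (hvR : v R = 0) :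
    ∫ r in 0..R, r ^ n * (v r * v' r) = -(n / 2 * ∫ r in 0..R, r ^ (n - 1) * v r ^ 2) := by
  have hint : IntervalIntegrable (fun r => r ^ n * (v r * v' r)) volume 0 R :=
    ((continuous_rpow_const hn.le).continuousOn.mul (hv.mul hv')).intervalIntegrable_of_Icc hR
  rw [integral_rpow_mul_deriv (f := fun r => v r ^ 2 / 2) hn hR ((hv.pow 2).div_const 2)
    (fun r hr => ((hderiv r hr).pow 2).div_const 2 |>.congr_deriv (by ring)) hint]
  simp only [hvR, mul_div_assoc', intervalIntegral.integral_div]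
  ring

theorem integral_rpow_mul_deriv_nonpos {n R : ℝ} {P P' : ℝ → ℝ} (hn : 0 < n) (hR : 0 ≤ R)
    (hP : ContinuousOn P (Icc 0 R)) (hP0 : ∀ r ∈ Icc 0 R, 0 ≤ P r) (hPR : P R = 0)
    (hderiv : ∀ r ∈ Ioo 0 R, HasDerivAt P (P' r) r)
    (hint : IntervalIntegrable (fun r => r ^ n * P' r) volume 0 R) :
    ∫ r in 0..R, r ^ n * P' r ≤ 0 := by
  have hP_int : 0 ≤ ∫ r in 0..R, r ^ (n - 1) * P r :=
    integral_nonneg hR fun r hr => mul_nonneg (rpow_nonneg hr.1 _) (hP0 r hr)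
  rw [integral_rpow_mul_deriv hn hR hP hderiv hint, hPR, mul_zero, zero_sub, neg_nonpos]
  exact mul_nonneg hn.le hP_int

theorem riccati_of_momentum_eq {n k R M : ℝ} {v v' vt P P' g : ℝ → ℝ}
    (hn : 0 < n) (hk : -1 < n + k) (hR : 0 < R)
    (hv : ContinuousOn v (Icc 0 R)) (hv' : ContinuousOn v' (Icc 0 R))
    (hvt : ContinuousOn vt (Icc 0 R)) (hv_deriv : ∀ r ∈ Ioo 0 R, HasDerivAt v (v' r) r)
    (hvR : v R = 0) (hP : ContinuousOn P (Icc 0 R)) (hP0 : ∀ r ∈ Icc 0 R, 0 ≤ P r)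
    (hPR : P R = 0) (hP_deriv : ∀ r ∈ Ioo 0 R, HasDerivAt P (P' r) r)
    (hg : ContinuousOn g (Icc 0 R)) (hgM : ∀ r ∈ Icc 0 R, g r ≤ M)
    (hmom : ∀ r ∈ Ioo 0 R, vt r + v r * v' r + P' r = -(r ^ k * g r)) :
    n * (n + 1) * (∫ r in 0..R, r ^ n * v r) ^ 2 / (2 * R ^ (n + 2))
      - R ^ (n + k + 1) * M / (n + k + 1) ≤ ∫ r in 0..R, r ^ n * vt r := by
  have hpow : ContinuousOn (fun r : ℝ => r ^ n) (Icc 0 R) :=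
    (continuous_rpow_const hn.le).continuousOn
  have hint_kin : IntervalIntegrable (fun r => -(r ^ n * (v r * v' r))) volume 0 R :=
    (hpow.mul (hv.mul hv')).neg.intervalIntegrable_of_Icc hR.le
  have hint_vt : IntervalIntegrable (fun r => r ^ n * vt r) volume 0 R :=
    (hpow.mul hvt).intervalIntegrable_of_Icc hR.le
  have hgrav : EqOn (fun r => r ^ n * (r ^ k * g r)) (fun r => r ^ (n + k) * g r) (uIoc 0 R) :=
    fun r hr => by
      rw [uIoc_of_le hR.le] at hr
      simp only [rpow_add hr.1]
      ring
  have hint_grav : IntervalIntegrable (fun r => r ^ n * (r ^ k * g r)) volume 0 R :=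
    (intervalIntegrable_congr hgrav).2
      ((intervalIntegrable_rpow' hk).mul_continuousOn (by rwa [uIcc_of_le hR.le]))
  have hint_P : IntervalIntegrable (fun r => r ^ n * P' r) volume 0 R :=
    ((hint_kin.sub hint_vt).sub hint_grav).congr_uIoo (by
      rw [uIoo_of_le hR.le]
      intro r hr
      linear_combination -r ^ n * hmom r hr)
  have hw : ∫ r in 0..R, r ^ n * vt r = -(∫ r in 0..R, r ^ n * (v r * v' r))
      - (∫ r in 0..R, r ^ n * P' r) - ∫ r in 0..R, r ^ n * (r ^ k * g r) := by
    rw [integral_congr_Ioo_of_le hR.le (g := fun r => -(r ^ n * (v r * v' r)) - r ^ n * P' r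
      - r ^ n * (r ^ k * g r)) fun r hr => by linear_combination r ^ n * hmom r hr,
      integral_sub (hint_kin.sub hint_P) hint_grav, integral_sub hint_kin hint_P,
      intervalIntegral.integral_neg]
  have hpress := integral_rpow_mul_deriv_nonpos hn hR.le hP hP0 hPR hP_deriv hint_P
  have hgrav_le : ∫ r in 0..R, r ^ n * (r ^ k * g r) ≤ R ^ (n + k + 1) * M / (n + k + 1) :=
    (integral_congr_ae (ae_of_all _ fun r hr => hgrav hr)).trans_le
      (integral_rpow_mul_le_of_le hk hR.le hg hgM)
  have hCS := sq_integral_rpow_mul_le hn hR hv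
  have hkinetic : n * (n + 1) * (∫ r in 0..R, r ^ n * v r) ^ 2 / (2 * R ^ (n + 2))
      ≤ n / 2 * ∫ r in 0..R, r ^ (n - 1) * v r ^ 2 := by
    rw [div_le_iff₀ (by positivity)]
    nlinarith [sq_nonneg (∫ r in 0..R, r ^ n * v r)]
  rw [hw, integral_rpow_mul_mul_deriv_eq hn hR.le hv hv' hv_deriv hvR]
  linarith

theorem riccati_of_eulerPoisson_slice {N : ℕ} {n R K γ M : ℝ} {ρ₀ v v' vt : ℝ → ℝ}
    (hn : 0 < n) (hnN : (N : ℝ) - 2 < n) (hR : 0 < R) (hK : 0 ≤ K) (hγ : 1 < γ)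
    (hρ : ContinuousOn ρ₀ (Icc 0 R)) (hρ0 : ∀ r, 0 ≤ ρ₀ r) (hρR : ρ₀ R = 0)
    (hmass : alphaConst N * (∫ s in 0..R, ρ₀ s * s ^ (N - 1)) = M)
    (hdiffp : ∀ r ∈ Ioo 0 R, DifferentiableAt ℝ (fun s => ρ₀ s ^ (γ - 1)) r)
    (hv : ContinuousOn v (Icc 0 R)) (hv' : ContinuousOn v' (Icc 0 R))
    (hvt : ContinuousOn vt (Icc 0 R)) (hv_deriv : ∀ r ∈ Ioo 0 R, HasDerivAt v (v' r) r)
    (hvR : v R = 0)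
    (hmom : ∀ r ∈ Ioo 0 R, vt r + v r * v' r
        + (K * γ / (γ - 1)) * deriv (fun s => ρ₀ s ^ (γ - 1)) r
      = -(alphaConst N * r ^ ((1 : ℝ) - N) * ∫ s in 0..r, ρ₀ s * s ^ (N - 1))) :
    n * (n + 1) * (∫ r in 0..R, r ^ n * v r) ^ 2 / (2 * R ^ (n + 2))
      - R ^ (n - N + 2) * M / (n - N + 2) ≤ ∫ r in 0..R, r ^ n * vt r := by
  set c := K * γ / (γ - 1)
  have hc : 0 ≤ c := div_nonneg (mul_nonneg hK (by linarith)) (by linarith)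
  have hdens : ContinuousOn (fun s => ρ₀ s * s ^ (N - 1)) (Icc 0 R) :=
    hρ.mul (continuous_pow _).continuousOn
  have hmass_cont : ContinuousOn (fun r => ∫ s in 0..r, ρ₀ s * s ^ (N - 1)) (Icc 0 R) := by
    simpa only [uIcc_of_le hR.le] using continuousOn_primitive_interval (a := 0) (b := R)
      (by simpa only [uIcc_of_le hR.le] using hdens.integrableOn_Icc (μ := volume))
  have hmass_le : ∀ r ∈ Icc 0 R, alphaConst N * (∫ s in 0..r, ρ₀ s * s ^ (N - 1)) ≤ M :=
    fun r hr => hmass ▸ mul_le_mul_of_nonneg_left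
      (integral_mono_interval le_rfl hr.1 hr.2 ((ae_restrict_iff' measurableSet_Ioc).2
        (ae_of_all _ fun s hs => mul_nonneg (hρ0 s) (pow_nonneg hs.1.le _)))
        (hdens.intervalIntegrable_of_Icc hR.le)) (alphaConst_nonneg N)
  have key := riccati_of_momentum_eq (k := 1 - N) (P := fun r => c * ρ₀ r ^ (γ - 1))
    (P' := fun r => c * deriv (fun s => ρ₀ s ^ (γ - 1)) r)
    (g := fun r => alphaConst N * ∫ s in 0..r, ρ₀ s * s ^ (N - 1)) hn (by linarith) hR hv hv' hvt
    hv_deriv hvR (continuousOn_const.mul (hρ.rpow_const fun _ _ => Or.inr (by linarith)))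
    (fun r _ => mul_nonneg hc (rpow_nonneg (hρ0 r) _))
    (by simp only [hρR, zero_rpow (by linarith : γ - 1 ≠ 0), mul_zero])
    (fun r hr => (hdiffp r hr).hasDerivAt.const_mul c) (continuousOn_const.mul hmass_cont)
    hmass_le (fun r hr => by linear_combination hmom r hr)
  rwa [show n + (1 - N) + 1 = n - N + 2 by ring] at key

theorem riccati_of_eulerPoisson {N : ℕ} {n R K γ M T : ℝ} {ρ V : ℝ → ℝ → ℝ}
    (hn : max ((N : ℝ) - 2) 0 < n) (hR : 0 < R) (hK : 0 ≤ K) (hγ : 1 < γ) (hT : 0 < T)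
    (hρC1 : ContDiffOn ℝ 1 (uncurry ρ) (Icc 0 T ×ˢ Ici 0))
    (hVC1 : ContDiffOn ℝ 1 (uncurry V) (Icc 0 T ×ˢ Ici 0))
    (hρnn : ∀ t r, 0 ≤ ρ t r) (hsupp : ∀ t r, R ≤ r → ρ t r = 0 ∧ V t r = 0)
    (hmass : ∀ t ∈ Icc 0 T, alphaConst N * (∫ s in 0..R, ρ t s * s ^ (N - 1)) = M)
    (hdiffp : ∀ t ∈ Icc 0 T, ∀ r ∈ Ioo 0 R, DifferentiableAt ℝ (fun s => ρ t s ^ (γ - 1)) r)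
    (hmom : ∀ t ∈ Icc 0 T, ∀ r ∈ Ioo 0 R,
      deriv (fun τ => V τ r) t + V t r * deriv (fun s => V t s) r
        + (K * γ / (γ - 1)) * deriv (fun s => ρ t s ^ (γ - 1)) r
      = -(alphaConst N * r ^ ((1 : ℝ) - N) * ∫ s in 0..r, ρ t s * s ^ (N - 1)))
    {t : ℝ} (ht : t ∈ Ioo 0 T) :
    n * (n + 1) * (∫ r in 0..R, r ^ n * V t r) ^ 2 / (2 * R ^ (n + 2))
      - R ^ (n - N + 2) * M / (n - N + 2)
      ≤ ∫ r in 0..R, r ^ n * partialFst V (Icc 0 T ×ˢ Ici 0) t r := by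
  have hS : UniqueDiffOn ℝ (Icc 0 T ×ˢ Ici (0 : ℝ)) :=
    (uniqueDiffOn_Icc hT).prod (uniqueDiffOn_Ici 0)
  have hVdiff := hVC1.differentiableOn one_ne_zero
  have ht' := Ioo_subset_Icc_self ht
  have hdt : ∀ r ∈ Ioo 0 R, HasDerivAt (fun τ => V τ r) (partialFst V _ t r) t := fun r hr =>
    hVdiff.hasDerivAt_partialFst (Icc_mem_nhds ht.1 ht.2) (mem_Ici.2 hr.1.le)
  have hdr : ∀ r ∈ Ioo 0 R, HasDerivAt (V t) (partialSnd V _ t r) r := fun r hr =>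
    hVdiff.hasDerivAt_partialSnd ht' (Ici_mem_nhds hr.1)
  refine riccati_of_eulerPoisson_slice ((le_max_right _ _).trans_lt hn)
    ((le_max_left _ _).trans_lt hn) hR hK hγ
    ((hρC1.continuousOn.uncurry_left t ht').mono Icc_subset_Ici_self) (hρnn t)
    (hsupp t R le_rfl).1 (hmass t ht') (hdiffp t ht')
    ((hVC1.continuousOn.uncurry_left t ht').mono Icc_subset_Ici_self)
    (((hVC1.continuousOn_partialSnd hS).uncurry_left t ht').mono Icc_subset_Ici_self)
    (((hVC1.continuousOn_partialFst hS).uncurry_left t ht').mono Icc_subset_Ici_self) hdr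
    (hsupp t R le_rfl).2 fun r hr => ?_
  rw [← (hdt r hr).deriv, ← (hdr r hr).deriv]
  exact hmom t ht' r hr

theorem riccati_inequality_attractive_general
    (N : ℕ) (n R K γ M T : ℝ)
    (hn : max ((N : ℝ) - 2) 0 < n) (hR : 0 < R) (hK : 0 ≤ K) (hγ : 1 < γ)
    (hT : 0 < T)
    (ρ V : ℝ → ℝ → ℝ)
    (hρC1 : ContDiffOn ℝ 1 (Function.uncurry ρ) (Set.Icc 0 T ×ˢ Set.Ici 0))
    (hVC1 : ContDiffOn ℝ 1 (Function.uncurry V) (Set.Icc 0 T ×ˢ Set.Ici 0))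
    (hρnn : ∀ t r, 0 ≤ ρ t r)
    (hsupp : ∀ t r, R ≤ r → ρ t r = 0 ∧ V t r = 0)
    (hmass : ∀ t ∈ Set.Icc (0:ℝ) T,
      alphaConst N * (∫ s in (0:ℝ)..R, ρ t s * s ^ (N - 1)) = M)
    (hdiffp : ∀ t ∈ Set.Icc (0:ℝ) T, ∀ r ∈ Set.Ioo (0:ℝ) R,
      DifferentiableAt ℝ (fun s => ρ t s ^ (γ - 1)) r)
    (hmom : ∀ t ∈ Set.Icc (0:ℝ) T, ∀ r ∈ Set.Ioo (0:ℝ) R,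
      deriv (fun τ => V τ r) t + V t r * deriv (fun s => V t s) r
        + (K * γ / (γ - 1)) * deriv (fun s => ρ t s ^ (γ - 1)) r
      = -(alphaConst N * r ^ ((1:ℝ) - N) * ∫ s in (0:ℝ)..r, ρ t s * s ^ (N - 1))) :
    DifferentiableOn ℝ (fun t => ∫ r in (0:ℝ)..R, r ^ n * V t r) (Set.Icc 0 T) ∧
    ∀ t ∈ Set.Icc (0:ℝ) T,
      n * (n + 1) * (∫ r in (0:ℝ)..R, r ^ n * V t r) ^ 2 / (2 * R ^ (n + 2))
        - R ^ (n - N + 2) * M / (n - N + 2)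
      ≤ derivWithin (fun t => ∫ r in (0:ℝ)..R, r ^ n * V t r) (Set.Icc 0 T) t := by
  have hn0 : 0 < n := (le_max_right _ _).trans_lt hn
  have hS : UniqueDiffOn ℝ (Icc 0 T ×ˢ Ici (0 : ℝ)) :=
    (uniqueDiffOn_Icc hT).prod (uniqueDiffOn_Ici 0)
  have hF := continuousOn_uncurry_rpow_mul hn0.le hR.le hVC1.continuousOn
  have hF' := continuousOn_uncurry_rpow_mul hn0.le hR.le (hVC1.continuousOn_partialFst hS)
  have hH : ∀ t ∈ Icc 0 T, HasDerivWithinAt (fun t => ∫ r in 0..R, r ^ n * V t r)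
      (∫ r in 0..R, r ^ n * partialFst V (Icc 0 T ×ˢ Ici 0) t r) (Icc 0 T) t := fun t ht =>
    hasDerivWithinAt_parametric_intervalIntegral hF hF' (fun τ hτ r hr =>
      ((hVC1.differentiableOn one_ne_zero).hasDerivAt_partialFst (Icc_mem_nhds hτ.1 hτ.2)
        (by rw [uIcc_of_le hR.le] at hr; exact hr.1)).const_mul _) ht
  refine ⟨fun t ht => (hH t ht).differentiableWithinAt, fun t ht => ?_⟩
  have hHc : ContinuousOn (fun t => ∫ r in 0..R, r ^ n * V t r) (Icc 0 T) :=
    fun t ht => (hH t ht).continuousWithinAt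
  have hwc := continuousOn_parametric_intervalIntegral isCompact_Icc hF'
  rw [(hH t ht).derivWithin (uniqueDiffOn_Icc hT t ht)]
  -- `hmom` determines `∂ₜV` only for `0 < t < T` (at `t = 0, T` its `deriv` is a junk value),
  -- so the inequality is proved on `Ioo 0 T` and extended to `Icc 0 T` by continuity.
  refine le_on_closure (fun t ht => riccati_of_eulerPoisson hn hR hK hγ hT hρC1 hVC1 hρnn hsupp
    hmass hdiffp hmom ht) ?_ ?_ (closure_Ioo hT.ne ▸ ht) <;> rw [closure_Ioo hT.ne]
  · fun_prop
  · exact hwc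

/-- For a radially symmetric `C¹` solution of the Euler–Poisson equations with
attractive forces, compactly supported in `[0,R]` and of total mass `M`, the functional
`H(t) = ∫₀^R rⁿ V(t,r) dr` is differentiable on `[0,T]` and satisfies the Riccati
differential inequality `H′(t) ≥ n(n+1)H(t)²/(2R^{n+2}) − R^{n−N+2}M/(n−N+2)`. -/
theorem riccati_inequality_attractive
    (N : ℕ) (hN : 1 ≤ N) (n R K γ M T : ℝ)
    (hn : max ((N : ℝ) - 2) 0 < n) (hR : 0 < R) (hK : 0 ≤ K) (hγ : 1 < γ)
    (hM : 0 < M) (hT : 0 < T)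
    (ρ V : ℝ → ℝ → ℝ)
    (hρC1 : ContDiffOn ℝ 1 (Function.uncurry ρ) (Set.Icc 0 T ×ˢ Set.Ici 0))
    (hVC1 : ContDiffOn ℝ 1 (Function.uncurry V) (Set.Icc 0 T ×ˢ Set.Ici 0))
    (hρnn : ∀ t r, 0 ≤ ρ t r)
    (hsupp : ∀ t r, R ≤ r → ρ t r = 0 ∧ V t r = 0)
    (hmass : ∀ t ∈ Set.Icc (0:ℝ) T,
      alphaConst N * (∫ s in (0:ℝ)..R, ρ t s * s ^ (N - 1)) = M)
    (hdiffp : ∀ t ∈ Set.Icc (0:ℝ) T, ∀ r ∈ Set.Ioo (0:ℝ) R,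
      DifferentiableAt ℝ (fun s => ρ t s ^ (γ - 1)) r)
    (hmom : ∀ t ∈ Set.Icc (0:ℝ) T, ∀ r ∈ Set.Ioo (0:ℝ) R,
      deriv (fun τ => V τ r) t + V t r * deriv (fun s => V t s) r
        + (K * γ / (γ - 1)) * deriv (fun s => ρ t s ^ (γ - 1)) r
      = -(alphaConst N * r ^ ((1:ℝ) - N) * ∫ s in (0:ℝ)..r, ρ t s * s ^ (N - 1))) :
    DifferentiableOn ℝ (fun t => ∫ r in (0:ℝ)..R, r ^ n * V t r) (Set.Icc 0 T) ∧
    ∀ t ∈ Set.Icc (0:ℝ) T,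
      n * (n + 1) * (∫ r in (0:ℝ)..R, r ^ n * V t r) ^ 2 / (2 * R ^ (n + 2))
        - R ^ (n - N + 2) * M / (n - N + 2)
      ≤ derivWithin (fun t => ∫ r in (0:ℝ)..R, r ^ n * V t r) (Set.Icc 0 T) t :=
  riccati_inequality_attractive_general N n R K γ M T hn hR hK hγ hT ρ V hρC1 hVC1 hρnn hsupp hmass
    hdiffp hmom
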